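/- arXiv:1508.06395 — 3 statements merged into one kernel-verified Lean document; each statement's English description precedes it below -/
import Mathlib

section
/- For n ≥ 1 and each i ∈ [n], let ρ_i be a bipartite distribution on U_i × V_i. Then Cor(ρ_1 ⊗ ⋯ ⊗ ρ_n) = max_{i∈[n]} Cor(ρ_i). -/
open scoped BigOperators ENNReal

namespace SR

variable {U V X Y : Type*}

/-- `μ` is a probability distribution on a finite type. -/
def IsDist {α : Type*} [Fintype α] (μ : α → ℝ) : Prop :=
  (∀ a, 0 ≤ μ a) ∧ ∑ a, μ a = 1

/-- Expectation of `f` under `μ`. -/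
def expect {α : Type*} [Fintype α] (μ : α → ℝ) (f : α → ℝ) : ℝ :=
  ∑ a, μ a * f a

/-- First (`U`-)marginal of a bipartite distribution. -/
def margFst [Fintype V] (ρ : U × V → ℝ) : U → ℝ :=
  fun u => ∑ v, ρ (u, v)

/-- Second (`V`-)marginal of a bipartite distribution. -/
def margSnd [Fintype U] (ρ : U × V → ℝ) : V → ℝ :=
  fun v => ∑ u, ρ (u, v)

/-- Maximum correlation of a bipartite distribution (sSup of the empty set is 0). -/
noncomputable def cor [Fintype U] [Fintype V] (ρ : U × V → ℝ) : ℝ :=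
  sSup { t : ℝ | ∃ (f : U → ℝ) (g : V → ℝ),
      expect (margFst ρ) f = 0 ∧ expect (margSnd ρ) g = 0 ∧
      expect (margFst ρ) (fun u => f u ^ 2) = 1 ∧
      expect (margSnd ρ) (fun v => g v ^ 2) = 1 ∧
      t = ∑ x : U × V, ρ x * (f x.1 * g x.2) }

/-- Tensor product of two bipartite distributions. -/
def tensor (ρ : U × V → ℝ) (σ : X × Y → ℝ) : (U × X) × (V × Y) → ℝ :=
  fun p => ρ (p.1.1, p.2.1) * σ (p.1.2, p.2.2)

/-- Tensor product of a family of bipartite distributions. -/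
def tensorPi {n : ℕ} {U V : Fin n → Type*} (ρ : ∀ i, U i × V i → ℝ) :
    (∀ i, U i) × (∀ i, V i) → ℝ :=
  fun p => ∏ i, ρ i (p.1 i, p.2 i)

/-- The distribution of `ℓ` i.i.d. samples from a bipartite distribution `ρ`. -/
def iid (ρ : U × V → ℝ) (ℓ : ℕ) : (Fin ℓ → U) × (Fin ℓ → V) → ℝ :=
  fun p => ∏ i, ρ (p.1 i, p.2 i)

/-- Agreement complexity of `ρ` at success probability `p`. -/
noncomputable def agr [Fintype U] [Fintype V] (ρ : U × V → ℝ) (p : ℝ) : ℝ :=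
  sInf { c : ℝ | ∃ (ℓ : ℕ) (f : (Fin ℓ → U) → ℝ) (g : (Fin ℓ → V) → ℝ),
      (∀ x, f x ∈ Set.Icc (0:ℝ) 1) ∧ (∀ y, g y ∈ Set.Icc (0:ℝ) 1) ∧
      p ≤ (∑ x : (Fin ℓ → U) × (Fin ℓ → V), iid ρ ℓ x * (f x.1 * g x.2)) ∧
      c = (∑ x : (Fin ℓ → U) × (Fin ℓ → V), iid ρ ℓ x * f x.1)
        + (∑ x : (Fin ℓ → U) × (Fin ℓ → V), iid ρ ℓ x * g x.2) }

/-- There is a `p`-collision protocol for `ρ` with domain size `n` and output size at most `k`.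
    The players may use private randomness (uniform over `Fin sA`, `Fin sB` weighted by
    distributions `μA`, `μB`, independent of everything else). -/
def ColLE [Fintype U] [Fintype V] (ρ : U × V → ℝ) (n : ℕ) (p : ℝ) (k : ℕ) : Prop :=
  ∃ (ℓ sA sB : ℕ) (μA : Fin sA → ℝ) (μB : Fin sB → ℝ)
    (A : (Fin ℓ → U) → Fin sA → Finset (Fin n))
    (B : (Fin ℓ → V) → Fin sB → Finset (Fin n)),
    IsDist μA ∧ IsDist μB ∧
    (∀ i : Fin n, p ≤ ∑ x : (Fin ℓ → U) × (Fin ℓ → V), ∑ rA, ∑ rB,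
        iid ρ ℓ x * (μA rA * μB rB) *
          (if i ∈ A x.1 rA ∧ i ∈ B x.2 rB then (1:ℝ) else 0)) ∧
    (∀ (x : (Fin ℓ → U) × (Fin ℓ → V)) (rA : Fin sA),
        0 < iid ρ ℓ x → 0 < μA rA → (A x.1 rA).card ≤ k) ∧
    (∀ (x : (Fin ℓ → U) × (Fin ℓ → V)) (rB : Fin sB),
        0 < iid ρ ℓ x → 0 < μB rB → (B x.2 rB).card ≤ k)

/-- Collision complexity `col_ρ(n, p)`, valued in `ℕ∞` (`sInf ∅ = ⊤`). -/
noncomputable def col [Fintype U] [Fintype V] (ρ : U × V → ℝ) (n : ℕ) (p : ℝ) : ℕ∞ :=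
  sInf { k : ℕ∞ | ∃ m : ℕ, k = (m : ℕ∞) ∧ ColLE ρ n p m }

/-- Base-2 Shannon entropy of a finitely supported distribution. -/
noncomputable def ent2 {α : Type*} [Fintype α] (μ : α → ℝ) : ℝ :=
  ∑ a, -(μ a * Real.logb 2 (μ a))

open Classical in
/-- Probability of an event under `μ`. -/
noncomputable def prEvent {Ω : Type*} [Fintype Ω] (μ : Ω → ℝ) (P : Ω → Prop) : ℝ :=
  ∑ ω, if P ω then μ ω else 0

/-- The distribution of a random variable `Z` conditioned on an event `P`. -/
noncomputable def condDist {Ω α : Type*} [Fintype Ω] (μ : Ω → ℝ) (Z : Ω → α)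
    (P : Ω → Prop) : α → ℝ :=
  fun a => prEvent μ (fun ω => Z ω = a ∧ P ω) / prEvent μ P

/-- The `L^r(μ)`-norm of a complex-valued function on a finite probability space. -/
noncomputable def lnorm {α : Type*} [Fintype α] (μ : α → ℝ) (r : ℝ) (h : α → ℂ) : ℝ :=
  (∑ a, μ a * ‖h a‖ ^ r) ^ (1 / r)

/-- The conditional-expectation operator `T_ρ` of a bipartite distribution. -/
noncomputable def condOp [Fintype U] [Fintype V] (ρ : U × V → ℝ) (f : U → ℂ) : V → ℂ :=
  fun v => ∑ u, ((ρ (u, v) / margSnd ρ v : ℝ) : ℂ) * f u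

/-- `ρ` is `q`-to-`p` hypercontractive. -/
def Hyper [Fintype U] [Fintype V] (ρ : U × V → ℝ) (q p : ℝ) : Prop :=
  ∀ f : U → ℂ, lnorm (margSnd ρ) q (condOp ρ f) ≤ lnorm (margFst ρ) p f

/-- Inner product over 𝔽₂. -/
def ipF2 {m : ℕ} (u v : Fin m → ZMod 2) : ZMod 2 := ∑ i, u i * v i

/-- `σ_{m,b}`: uniform distribution on pairs `(u,v) ∈ 𝔽₂^m × 𝔽₂^m` with `u·v = b`. -/
noncomputable def sigmaIP (m : ℕ) (b : ZMod 2) :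
    ((Fin m → ZMod 2) × (Fin m → ZMod 2)) → ℝ :=
  fun p => if ipF2 p.1 p.2 = b then
      (((Finset.univ.filter
        (fun q : (Fin m → ZMod 2) × (Fin m → ZMod 2) => ipF2 q.1 q.2 = b)).card : ℝ))⁻¹
    else 0

/-- `ρ_disj`: uniform distribution on `{(0,0),(0,1),(1,0)} ⊆ {0,1} × {0,1}`
    (with `false = 0`, `true = 1`). -/
noncomputable def rhoDisj : Bool × Bool → ℝ :=
  fun x => if x = (true, true) then 0 else 1/3


/-! For `ρ ⊗ σ` and centred `f(u, x)`, `g(v, y)`, split `f = A + (f - A)` with `A(u)` the mean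
of `f(u, ·)` under `σ`, and likewise `g = B + (g - B)`. The cross terms vanish, so the correlation
is `E_ρ[A B]`, at most `Cor ρ ‖A‖ ‖B‖`, plus the `ρ`-average over `(u, v)` of the `σ`-correlation
of the fluctuations, at most `Cor σ ‖α(u)‖ ‖β(v)‖` for their conditional norms `α`, `β`. Since
`‖f‖² = ‖A‖² + ‖α‖²` and `‖g‖² = ‖B‖² + ‖β‖²`, Cauchy–Schwarz in the plane gives
`Cor(ρ ⊗ σ) ≤ max (Cor ρ) (Cor σ)`; the reverse inequality holds because functions of one factor
are test functions for the product. Induction on the number of factors finishes. -/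

section Expect

variable {α : Type*} [Fintype α] {μ : α → ℝ}

noncomputable def l2Norm (μ : α → ℝ) (f : α → ℝ) : ℝ := √(expect μ fun a => f a ^ 2)

theorem l2Norm_nonneg (μ : α → ℝ) (f : α → ℝ) : 0 ≤ l2Norm μ f := Real.sqrt_nonneg _

theorem sq_l2Norm (hμ : ∀ a, 0 ≤ μ a) (f : α → ℝ) :
    l2Norm μ f ^ 2 = expect μ fun a => f a ^ 2 :=
  Real.sq_sqrt <| Finset.sum_nonneg fun a _ => mul_nonneg (hμ a) (sq_nonneg _)

theorem expect_sub_expect (hμ : ∑ a, μ a = 1) (f : α → ℝ) :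
    expect μ (fun a => f a - expect μ f) = 0 := by
  simp only [expect, mul_sub, Finset.sum_sub_distrib, ← Finset.sum_mul, hμ, one_mul, sub_self]

theorem expect_sq_eq_sq_expect_add (hμ : ∑ a, μ a = 1) (f : α → ℝ) :
    (expect μ fun a => f a ^ 2) =
      expect μ f ^ 2 + expect μ fun a => (f a - expect μ f) ^ 2 := by
  have h := expect_sub_expect hμ f
  simp only [expect] at h ⊢
  set m := ∑ a, μ a * f a
  calc ∑ a, μ a * f a ^ 2
      = m ^ 2 * ∑ a, μ a + 2 * m * ∑ a, μ a * (f a - m) + ∑ a, μ a * (f a - m) ^ 2 := by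
        simp only [Finset.mul_sum, ← Finset.sum_add_distrib]
        exact Finset.sum_congr rfl fun a _ => by ring
    _ = m ^ 2 + ∑ a, μ a * (f a - m) ^ 2 := by rw [hμ, h]; ring

theorem expect_div_const (μ : α → ℝ) (f : α → ℝ) (c : ℝ) :
    expect μ (fun a => f a / c) = expect μ f / c := by
  simp only [expect, Finset.sum_div, mul_div_assoc]

theorem IsDist.comp_equiv {β : Type*} [Fintype β] (hμ : IsDist μ) (e : β ≃ α) :
    IsDist (μ ∘ e) :=
  ⟨fun b => hμ.1 (e b), by rw [← hμ.2]; exact e.sum_comp μ⟩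

end Expect

section Bipartite

variable [Fintype U] [Fintype V] {ρ : U × V → ℝ}

def corr (ρ : U × V → ℝ) (f : U → ℝ) (g : V → ℝ) : ℝ := ∑ x, ρ x * (f x.1 * g x.2)

theorem margFst_nonneg (hρ : IsDist ρ) (u : U) : 0 ≤ margFst ρ u :=
  Finset.sum_nonneg fun v _ => hρ.1 (u, v)

theorem margSnd_nonneg (hρ : IsDist ρ) (v : V) : 0 ≤ margSnd ρ v :=
  Finset.sum_nonneg fun u _ => hρ.1 (u, v)

theorem expect_margFst (ρ : U × V → ℝ) (f : U → ℝ) :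
    expect (margFst ρ) f = ∑ x, ρ x * f x.1 := by
  simp only [expect, margFst, Finset.sum_mul, Fintype.sum_prod_type]

theorem expect_margSnd (ρ : U × V → ℝ) (g : V → ℝ) :
    expect (margSnd ρ) g = ∑ x, ρ x * g x.2 := by
  simp only [expect, margSnd, Finset.sum_mul, Fintype.sum_prod_type_right]

theorem sum_margFst (hρ : IsDist ρ) : ∑ u, margFst ρ u = 1 := by
  simpa [expect] using (expect_margFst ρ 1).trans (by simpa using hρ.2)

theorem sum_margSnd (hρ : IsDist ρ) : ∑ v, margSnd ρ v = 1 := by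
  simpa [expect] using (expect_margSnd ρ 1).trans (by simpa using hρ.2)

theorem corr_le_l2Norm_mul_l2Norm (hρ : ∀ x, 0 ≤ ρ x) (f : U → ℝ) (g : V → ℝ) :
    corr ρ f g ≤ l2Norm (margFst ρ) f * l2Norm (margSnd ρ) g := by
  have hsq : ∀ x, √(ρ x) * √(ρ x) = ρ x := fun x => Real.mul_self_sqrt (hρ x)
  calc corr ρ f g = ∑ x, (√(ρ x) * f x.1) * (√(ρ x) * g x.2) :=
        Finset.sum_congr rfl fun x _ => by linear_combination -(f x.1 * g x.2) * hsq x
    _ ≤ √(∑ x, (√(ρ x) * f x.1) ^ 2) * √(∑ x, (√(ρ x) * g x.2) ^ 2) :=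
        Real.sum_mul_le_sqrt_mul_sqrt _ _ _
    _ = l2Norm (margFst ρ) f * l2Norm (margSnd ρ) g := by
        simp only [mul_pow, Real.sq_sqrt (hρ _), l2Norm, expect_margFst, expect_margSnd]

theorem corr_sub_expect (hρ : IsDist ρ) (f : U → ℝ) (g : V → ℝ) :
    corr ρ (fun u => f u - expect (margFst ρ) f) (fun v => g v - expect (margSnd ρ) g) =
      corr ρ f g - expect (margFst ρ) f * expect (margSnd ρ) g := by
  rw [expect_margFst, expect_margSnd]
  set a := ∑ x, ρ x * f x.1
  set b := ∑ x, ρ x * g x.2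
  have h : ∀ x : U × V, ρ x * ((f x.1 - a) * (g x.2 - b)) =
      ρ x * (f x.1 * g x.2) - a * (ρ x * g x.2) - b * (ρ x * f x.1) + a * b * ρ x :=
    fun x => by ring
  simp only [corr, h, Finset.sum_add_distrib, Finset.sum_sub_distrib, ← Finset.mul_sum, hρ.2]
  ring

def corSet (ρ : U × V → ℝ) : Set ℝ :=
  { t | ∃ (f : U → ℝ) (g : V → ℝ),
      expect (margFst ρ) f = 0 ∧ expect (margSnd ρ) g = 0 ∧
      expect (margFst ρ) (fun u => f u ^ 2) = 1 ∧
      expect (margSnd ρ) (fun v => g v ^ 2) = 1 ∧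
      t = corr ρ f g }

theorem cor_eq_sSup (ρ : U × V → ℝ) : cor ρ = sSup (corSet ρ) := rfl

theorem corSet_bddAbove (hρ : IsDist ρ) : BddAbove (corSet ρ) := by
  refine ⟨1, ?_⟩
  rintro _ ⟨f, g, -, -, hf2, hg2, rfl⟩
  simpa [l2Norm, hf2, hg2] using corr_le_l2Norm_mul_l2Norm hρ.1 f g

theorem cor_nonneg (hρ : IsDist ρ) : 0 ≤ cor ρ := by
  rcases (corSet ρ).eq_empty_or_nonempty with h | ⟨_, f, g, hf, hg, hf2, hg2, rfl⟩
  · rw [cor_eq_sSup, h, Real.sSup_empty]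
  have hpos : corr ρ f g ≤ cor ρ :=
    le_csSup (corSet_bddAbove hρ) ⟨f, g, hf, hg, hf2, hg2, rfl⟩
  have hneg : -corr ρ f g ≤ cor ρ := by
    refine le_csSup (corSet_bddAbove hρ) ⟨-f, g, ?_, hg, ?_, hg2, ?_⟩
    · simpa [expect, Finset.sum_neg_distrib] using hf
    · simpa using hf2
    · simp [corr, Finset.sum_neg_distrib]
  linarith

theorem cor_le_of_forall_corr_le {M : ℝ} (hM : 0 ≤ M)
    (h : ∀ f g, expect (margFst ρ) f = 0 → expect (margSnd ρ) g = 0 →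
      corr ρ f g ≤ M * l2Norm (margFst ρ) f * l2Norm (margSnd ρ) g) :
    cor ρ ≤ M := by
  rw [cor_eq_sSup]
  refine Real.sSup_le ?_ hM
  rintro _ ⟨f, g, hf, hg, hf2, hg2, rfl⟩
  simpa only [l2Norm, hf2, hg2, Real.sqrt_one, mul_one] using h f g hf hg

theorem corr_le_cor_mul (hρ : IsDist ρ) {f : U → ℝ} {g : V → ℝ}
    (hf : expect (margFst ρ) f = 0) (hg : expect (margSnd ρ) g = 0) :
    corr ρ f g ≤ cor ρ * l2Norm (margFst ρ) f * l2Norm (margSnd ρ) g := by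
  set a := l2Norm (margFst ρ) f
  set b := l2Norm (margSnd ρ) g
  have hCS : corr ρ f g ≤ a * b := corr_le_l2Norm_mul_l2Norm hρ.1 f g
  have ha0 : 0 ≤ a := l2Norm_nonneg _ f
  have hb0 : 0 ≤ b := l2Norm_nonneg _ g
  rcases ha0.eq_or_lt with ha | ha
  · rw [← ha] at hCS ⊢
    simpa using hCS
  rcases hb0.eq_or_lt with hb | hb
  · rw [← hb] at hCS ⊢
    simpa using hCS
  have hmem : corr ρ f g / (a * b) ∈ corSet ρ := by
    refine ⟨fun u => f u / a, fun v => g v / b, ?_, ?_, ?_, ?_, ?_⟩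
    · rw [expect_div_const, hf, zero_div]
    · rw [expect_div_const, hg, zero_div]
    · simp only [div_pow]
      rw [expect_div_const, ← sq_l2Norm (margFst_nonneg hρ)]
      exact div_self (by positivity)
    · simp only [div_pow]
      rw [expect_div_const, ← sq_l2Norm (margSnd_nonneg hρ)]
      exact div_self (by positivity)
    · simp only [corr, Finset.sum_div]
      exact Finset.sum_congr rfl fun x _ => by ring
  have h := le_csSup (corSet_bddAbove hρ) hmem
  rw [← cor_eq_sSup, div_le_iff₀ (by positivity)] at h
  linarith

theorem corr_le_mul_add_cor_mul (hρ : IsDist ρ) (f : U → ℝ) (g : V → ℝ) :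
    corr ρ f g ≤ expect (margFst ρ) f * expect (margSnd ρ) g +
      cor ρ * l2Norm (margFst ρ) (fun u => f u - expect (margFst ρ) f) *
        l2Norm (margSnd ρ) (fun v => g v - expect (margSnd ρ) g) := by
  have h := corr_le_cor_mul hρ (expect_sub_expect (sum_margFst hρ) f)
    (expect_sub_expect (sum_margSnd hρ) g)
  rw [corr_sub_expect hρ] at h
  linarith

/-- `hmap` says that `ρ` is the push-forward of `ρ'` under `φ × ψ`. -/
theorem cor_le_cor_of_map {U' V' : Type*} [Fintype U'] [Fintype V'] {ρ' : U' × V' → ℝ}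
    (hρ' : IsDist ρ') (φ : U' → U) (ψ : V' → V)
    (hmap : ∀ F : U × V → ℝ, ∑ x, ρ' x * F (φ x.1, ψ x.2) = ∑ y, ρ y * F y) :
    cor ρ ≤ cor ρ' := by
  refine Real.sSup_le ?_ (cor_nonneg hρ')
  rintro _ ⟨f, g, hf, hg, hf2, hg2, rfl⟩
  refine le_csSup (corSet_bddAbove hρ') ⟨f ∘ φ, g ∘ ψ, ?_, ?_, ?_, ?_, ?_⟩
  · rw [expect_margFst, ← hf, expect_margFst]
    exact hmap fun y => f y.1
  · rw [expect_margSnd, ← hg, expect_margSnd]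
    exact hmap fun y => g y.2
  · rw [expect_margFst, ← hf2, expect_margFst]
    exact hmap fun y => f y.1 ^ 2
  · rw [expect_margSnd, ← hg2, expect_margSnd]
    exact hmap fun y => g y.2 ^ 2
  · exact (hmap fun y => f y.1 * g y.2).symm

theorem cor_comp_prodCongr {U' V' : Type*} [Fintype U'] [Fintype V'] (hρ : IsDist ρ)
    (e : U' ≃ U) (e' : V' ≃ V) :
    cor (ρ ∘ e.prodCongr e') = cor ρ :=
  (cor_le_cor_of_map hρ e.symm e'.symm fun F => by
      rw [← (e.prodCongr e').sum_comp]
      simp).antisymm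
    (cor_le_cor_of_map (hρ.comp_equiv _) e e' fun F =>
      (e.prodCongr e').sum_comp fun y => ρ y * F y)

theorem cor_eq_zero_of_subsingleton [Subsingleton U] (hρ : IsDist ρ) : cor ρ = 0 := by
  suffices corSet ρ = ∅ by rw [cor_eq_sSup, this, Real.sSup_empty]
  refine Set.eq_empty_of_forall_notMem ?_
  rintro _ ⟨f, -, hf, -, hf2, -, -⟩
  obtain ⟨u⟩ : Nonempty U := by
    by_contra h
    rw [not_nonempty_iff] at h
    simpa using hρ.2
  have hconst : ∀ h : U → ℝ, expect (margFst ρ) h = h u := fun h => by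
    calc expect (margFst ρ) h = ∑ u', margFst ρ u' * h u :=
          Finset.sum_congr rfl fun u' _ => by rw [Subsingleton.elim u' u]
      _ = h u := by rw [← Finset.sum_mul, sum_margFst hρ, one_mul]
  rw [hconst] at hf hf2
  simp [hf] at hf2

end Bipartite

theorem mul_add_mul_le_mul_of_sq_eq {a b c d F G : ℝ} (hF : 0 ≤ F) (hG : 0 ≤ G)
    (hFsq : F ^ 2 = a ^ 2 + c ^ 2) (hGsq : G ^ 2 = b ^ 2 + d ^ 2) :
    a * b + c * d ≤ F * G := by
  refine le_of_sq_le_sq ?_ (mul_nonneg hF hG)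
  rw [mul_pow, hFsq, hGsq]
  nlinarith [sq_nonneg (a * d - b * c)]

section Tensor

variable [Fintype U] [Fintype V] [Fintype X] [Fintype Y] {ρ : U × V → ℝ} {σ : X × Y → ℝ}

theorem sum_tensor_mul (ρ : U × V → ℝ) (σ : X × Y → ℝ) (F : (U × X) × (V × Y) → ℝ) :
    ∑ p, tensor ρ σ p * F p = ∑ a, ρ a * ∑ b, σ b * F ((a.1, b.1), (a.2, b.2)) := by
  rw [← (Equiv.prodProdProdComm U V X Y).sum_comp, Fintype.sum_prod_type]
  simp only [Finset.mul_sum, ← mul_assoc]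
  rfl

theorem isDist_tensor (hρ : IsDist ρ) (hσ : IsDist σ) : IsDist (tensor ρ σ) := by
  refine ⟨fun p => mul_nonneg (hρ.1 _) (hσ.1 _), ?_⟩
  simpa [hρ.2, hσ.2] using sum_tensor_mul ρ σ 1

theorem expect_margFst_tensor (ρ : U × V → ℝ) (σ : X × Y → ℝ) (f : U × X → ℝ) :
    expect (margFst (tensor ρ σ)) f =
      expect (margFst ρ) fun u => expect (margFst σ) fun x => f (u, x) := by
  simp only [expect_margFst, sum_tensor_mul]

theorem expect_margSnd_tensor (ρ : U × V → ℝ) (σ : X × Y → ℝ) (g : V × Y → ℝ) :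
    expect (margSnd (tensor ρ σ)) g =
      expect (margSnd ρ) fun v => expect (margSnd σ) fun y => g (v, y) :=
  expect_margFst_tensor (fun x => ρ x.swap) (fun x => σ x.swap) g

theorem corr_tensor (ρ : U × V → ℝ) (σ : X × Y → ℝ) (f : U × X → ℝ) (g : V × Y → ℝ) :
    corr (tensor ρ σ) f g =
      ∑ a, ρ a * corr σ (fun x => f (a.1, x)) (fun y => g (a.2, y)) :=
  sum_tensor_mul ρ σ fun p => f p.1 * g p.2

theorem sq_l2Norm_margFst_tensor (hρ : IsDist ρ) (hσ : IsDist σ) (f : U × X → ℝ) :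
    l2Norm (margFst (tensor ρ σ)) f ^ 2 =
      l2Norm (margFst ρ) (fun u => expect (margFst σ) fun x => f (u, x)) ^ 2 +
        l2Norm (margFst ρ) (fun u => l2Norm (margFst σ)
          fun x => f (u, x) - expect (margFst σ) fun x => f (u, x)) ^ 2 := by
  simp only [sq_l2Norm (margFst_nonneg (isDist_tensor hρ hσ)), sq_l2Norm (margFst_nonneg hρ),
    sq_l2Norm (margFst_nonneg hσ), expect_margFst_tensor,
    expect_sq_eq_sq_expect_add (sum_margFst hσ) fun x => f (_, x)]
  simp only [expect, mul_add, Finset.sum_add_distrib]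

theorem sq_l2Norm_margSnd_tensor (hρ : IsDist ρ) (hσ : IsDist σ) (g : V × Y → ℝ) :
    l2Norm (margSnd (tensor ρ σ)) g ^ 2 =
      l2Norm (margSnd ρ) (fun v => expect (margSnd σ) fun y => g (v, y)) ^ 2 +
        l2Norm (margSnd ρ) (fun v => l2Norm (margSnd σ)
          fun y => g (v, y) - expect (margSnd σ) fun y => g (v, y)) ^ 2 :=
  sq_l2Norm_margFst_tensor (ρ := fun x => ρ x.swap) (σ := fun x => σ x.swap)
    (hρ.comp_equiv (Equiv.prodComm V U)) (hσ.comp_equiv (Equiv.prodComm Y X)) g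

theorem cor_tensor_le (hρ : IsDist ρ) (hσ : IsDist σ) :
    cor (tensor ρ σ) ≤ max (cor ρ) (cor σ) := by
  set M := max (cor ρ) (cor σ)
  have hM : 0 ≤ M := (cor_nonneg hρ).trans (le_max_left _ _)
  refine cor_le_of_forall_corr_le hM fun f g hf hg => ?_
  set A : U → ℝ := fun u => expect (margFst σ) fun x => f (u, x)
  set B : V → ℝ := fun v => expect (margSnd σ) fun y => g (v, y)
  set α : U → ℝ := fun u => l2Norm (margFst σ) fun x => f (u, x) - A u
  set β : V → ℝ := fun v => l2Norm (margSnd σ) fun y => g (v, y) - B v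
  have hA : expect (margFst ρ) A = 0 := by rwa [expect_margFst_tensor] at hf
  have hB : expect (margSnd ρ) B = 0 := by rwa [expect_margSnd_tensor] at hg
  have hAB : corr ρ A B ≤ M * (l2Norm (margFst ρ) A * l2Norm (margSnd ρ) B) := by
    refine (corr_le_cor_mul hρ hA hB).trans ?_
    rw [mul_assoc]
    exact mul_le_mul_of_nonneg_right (le_max_left _ _)
      (mul_nonneg (l2Norm_nonneg _ _) (l2Norm_nonneg _ _))
  have hαβ : cor σ * corr ρ α β ≤ M * (l2Norm (margFst ρ) α * l2Norm (margSnd ρ) β) :=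
    (mul_le_mul_of_nonneg_left (corr_le_l2Norm_mul_l2Norm hρ.1 α β) (cor_nonneg hσ)).trans
      (mul_le_mul_of_nonneg_right (le_max_right _ _)
        (mul_nonneg (l2Norm_nonneg _ _) (l2Norm_nonneg _ _)))
  calc corr (tensor ρ σ) f g
      ≤ ∑ a, ρ a * (A a.1 * B a.2 + cor σ * α a.1 * β a.2) := by
        rw [corr_tensor]
        exact Finset.sum_le_sum fun a _ =>
          mul_le_mul_of_nonneg_left (corr_le_mul_add_cor_mul hσ _ _) (hρ.1 a)
    _ = corr ρ A B + cor σ * corr ρ α β := by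
        simp only [corr, mul_add, Finset.sum_add_distrib, Finset.mul_sum]
        exact congrArg _ (Finset.sum_congr rfl fun a _ => by ring)
    _ ≤ M * (l2Norm (margFst ρ) A * l2Norm (margSnd ρ) B +
          l2Norm (margFst ρ) α * l2Norm (margSnd ρ) β) := by
        rw [mul_add]
        exact add_le_add hAB hαβ
    _ ≤ M * (l2Norm (margFst (tensor ρ σ)) f * l2Norm (margSnd (tensor ρ σ)) g) :=
        mul_le_mul_of_nonneg_left (mul_add_mul_le_mul_of_sq_eq (l2Norm_nonneg _ f)
          (l2Norm_nonneg _ g) (sq_l2Norm_margFst_tensor hρ hσ f)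
          (sq_l2Norm_margSnd_tensor hρ hσ g)) hM
    _ = M * l2Norm (margFst (tensor ρ σ)) f * l2Norm (margSnd (tensor ρ σ)) g :=
        (mul_assoc _ _ _).symm

theorem le_cor_tensor_left (hρ : IsDist ρ) (hσ : IsDist σ) : cor ρ ≤ cor (tensor ρ σ) :=
  cor_le_cor_of_map (isDist_tensor hρ hσ) Prod.fst Prod.fst fun F => by
    simp only [sum_tensor_mul, ← Finset.sum_mul, hσ.2, one_mul]

theorem le_cor_tensor_right (hρ : IsDist ρ) (hσ : IsDist σ) : cor σ ≤ cor (tensor ρ σ) :=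
  cor_le_cor_of_map (isDist_tensor hρ hσ) Prod.snd Prod.snd fun F => by
    simp only [sum_tensor_mul, Finset.mul_sum, Prod.mk.eta]
    rw [Finset.sum_comm]
    exact Finset.sum_congr rfl fun b _ => by rw [← Finset.sum_mul, hρ.2, one_mul]

theorem cor_tensor (hρ : IsDist ρ) (hσ : IsDist σ) :
    cor (tensor ρ σ) = max (cor ρ) (cor σ) :=
  (cor_tensor_le hρ hσ).antisymm
    (max_le (le_cor_tensor_left hρ hσ) (le_cor_tensor_right hρ hσ))

end Tensor

theorem isDist_tensorPi {n : ℕ} {U V : Fin n → Type*} [∀ i, Fintype (U i)] [∀ i, Fintype (V i)]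
    {ρ : ∀ i, U i × V i → ℝ} (hρ : ∀ i, IsDist (ρ i)) : IsDist (tensorPi ρ) := by
  refine ⟨fun p => Finset.prod_nonneg fun i _ => (hρ i).1 _, ?_⟩
  rw [← (Equiv.arrowProdEquivProdArrow _ U V).sum_comp]
  exact (Fintype.prod_sum _).symm.trans (Finset.prod_eq_one fun i _ => (hρ i).2)

theorem tensorPi_comp_consEquiv {n : ℕ} {U V : Fin (n + 1) → Type*} (ρ : ∀ i, U i × V i → ℝ) :
    tensorPi ρ ∘ (Fin.consEquiv U).prodCongr (Fin.consEquiv V) =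
      tensor (ρ 0) (tensorPi fun i => ρ i.succ) :=
  funext fun _ => Fin.prod_univ_succ _

theorem cor_tensorPi_succ {n : ℕ} {U V : Fin (n + 1) → Type*} [∀ i, Fintype (U i)]
    [∀ i, Fintype (V i)] {ρ : ∀ i, U i × V i → ℝ} (hρ : ∀ i, IsDist (ρ i)) :
    cor (tensorPi ρ) = max (cor (ρ 0)) (cor (tensorPi fun i => ρ i.succ)) := by
  rw [← cor_tensor (hρ 0) (isDist_tensorPi fun i => hρ i.succ), ← tensorPi_comp_consEquiv,
    cor_comp_prodCongr (isDist_tensorPi hρ)]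

theorem cor_tensorPi_le_iff {n : ℕ} {U V : Fin n → Type*} [∀ i, Fintype (U i)]
    [∀ i, Fintype (V i)] {ρ : ∀ i, U i × V i → ℝ} (hρ : ∀ i, IsDist (ρ i)) {M : ℝ}
    (hM : 0 ≤ M) : cor (tensorPi ρ) ≤ M ↔ ∀ i, cor (ρ i) ≤ M := by
  induction n with
  | zero => simp [cor_eq_zero_of_subsingleton (isDist_tensorPi hρ), hM]
  | succ n ih =>
    rw [cor_tensorPi_succ hρ, max_le_iff, ih fun i => hρ i.succ, Fin.forall_fin_succ]

theorem stmt1_general {n : ℕ} (hn : 0 < n) (U V : Fin n → Type)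
    [∀ i, Fintype (U i)] [∀ i, Fintype (V i)]
    (ρ : ∀ i, (U i × V i) → ℝ) (hρ : ∀ i, IsDist (ρ i)) :
    cor (tensorPi ρ)
      = Finset.univ.sup' ⟨⟨0, hn⟩, Finset.mem_univ _⟩ (fun i => cor (ρ i)) := by
  have hle_sup : ∀ i, cor (ρ i) ≤ Finset.univ.sup' _ (fun i => cor (ρ i)) := fun i =>
    Finset.le_sup' (fun i => cor (ρ i)) (Finset.mem_univ i)
  refine le_antisymm ?_ (Finset.sup'_le _ _ fun i _ => ?_)
  · exact (cor_tensorPi_le_iff hρ ((cor_nonneg (hρ _)).trans (hle_sup ⟨0, hn⟩))).2 hle_sup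
  · exact (cor_tensorPi_le_iff hρ (cor_nonneg (isDist_tensorPi hρ))).1 le_rfl i

theorem stmt1 {n : ℕ} (hn : 0 < n) (U V : Fin n → Type)
    [∀ i, Fintype (U i)] [∀ i, Fintype (V i)] [∀ i, Nonempty (U i)] [∀ i, Nonempty (V i)]
    (ρ : ∀ i, (U i × V i) → ℝ) (hρ : ∀ i, IsDist (ρ i)) :
    cor (tensorPi ρ)
      = Finset.univ.sup' ⟨⟨0, hn⟩, Finset.mem_univ _⟩ (fun i => cor (ρ i)) :=
  stmt1_general hn U V ρ hρ

end SR
end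

section
/- Let n ≥ 1, let C ≥ 0 be a real number, let X = (X_1, …, X_n) be uniformly distributed over {0,1}^n, and let M be a random variable on the same finite probability space taking at most 2^C distinct values. For each value m in the support of M, let L(m) = {i ∈ [n] : H(X_i | M = m) < 1/2}. Then for every real t ≥ 0, Pr[|L(M)| ≥ t] ≤ 2^{C − t/2}. -/
open scoped BigOperators ENNReal

namespace SR

variable {U V X Y : Type*}

/-! If `p = Pr[M = m] > 0`, the conditional law of `X` given `M = m` gives every point mass at
most `2⁻ⁿ / p`, so its entropy is at least `n + log₂ p`. By subadditivity that entropy is at most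
`∑ᵢ H(Xᵢ | M = m) ≤ n - |L(m)| / 2`, as each term is at most `1` and the terms indexed by `L(m)`
are below `1/2`. Hence `p ≤ 2^(-|L(m)|/2)`, and a union bound over the at most `2^C` values of
`M` concludes. -/

section Probability

variable {Ω α β : Type*} [Fintype Ω] {μ : Ω → ℝ}

lemma prEvent_eq_sum_filter (μ : Ω → ℝ) (P : Ω → Prop) [DecidablePred P] :
    prEvent μ P = ∑ ω ∈ Finset.univ.filter P, μ ω := by
  rw [Finset.sum_filter]
  unfold prEvent
  congr!

lemma prEvent_nonneg (hμ : ∀ ω, 0 ≤ μ ω) (P : Ω → Prop) : 0 ≤ prEvent μ P := by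
  classical
  rw [prEvent_eq_sum_filter]
  exact Finset.sum_nonneg fun ω _ => hμ ω

lemma prEvent_mono (hμ : ∀ ω, 0 ≤ μ ω) {P Q : Ω → Prop} (hPQ : ∀ ω, P ω → Q ω) :
    prEvent μ P ≤ prEvent μ Q := by
  classical
  rw [prEvent_eq_sum_filter, prEvent_eq_sum_filter]
  exact Finset.sum_le_sum_of_subset_of_nonneg (Finset.monotone_filter_right _ fun ω _ => hPQ ω)
    fun ω _ _ => hμ ω

lemma le_prEvent (hμ : ∀ ω, 0 ≤ μ ω) {P : Ω → Prop} {ω : Ω} (hω : P ω) : μ ω ≤ prEvent μ P := by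
  classical
  rw [prEvent_eq_sum_filter]
  exact Finset.single_le_sum (fun ω _ => hμ ω) (by simpa using hω)

lemma prEvent_eq_sum_image [DecidableEq β] (μ : Ω → ℝ) (M : Ω → β) (P : Ω → Prop) :
    prEvent μ P = ∑ m ∈ Finset.univ.image M, prEvent μ (fun ω => P ω ∧ M ω = m) := by
  classical
  simp only [prEvent_eq_sum_filter, ← Finset.filter_filter]
  exact (Finset.sum_fiberwise_of_maps_to (fun ω _ => Finset.mem_image_of_mem M
    (Finset.mem_univ ω)) _).symm

lemma expect_prEvent_eq_expect_comp [Fintype α] [Fintype β] (ν : α → ℝ) (f : α → β)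
    (g : β → ℝ) :
    expect (fun b => prEvent ν (fun a => f a = b)) g = expect ν (fun a => g (f a)) := by
  classical
  simp only [expect, prEvent_eq_sum_filter, Finset.sum_mul]
  rw [← Finset.sum_fiberwise Finset.univ f (fun a => ν a * g (f a))]
  refine Finset.sum_congr rfl fun b _ => Finset.sum_congr rfl fun a ha => ?_
  rw [(Finset.mem_filter.mp ha).2]

lemma sum_prEvent_eq_sum [Fintype α] [Fintype β] (ν : α → ℝ) (f : α → β) :
    ∑ b, prEvent ν (fun a => f a = b) = ∑ a, ν a := by
  simpa [expect] using expect_prEvent_eq_expect_comp ν f 1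

lemma prEvent_condDist [Fintype α] (μ : Ω → ℝ) (Z : Ω → α) (P : Ω → Prop) (Q : α → Prop) :
    prEvent (condDist μ Z P) Q = prEvent μ (fun ω => Q (Z ω) ∧ P ω) / prEvent μ P := by
  classical
  simp only [condDist, prEvent_eq_sum_filter, ← Finset.sum_div]
  congr 1
  rw [← Finset.sum_fiberwise_of_maps_to (s := Finset.univ.filter fun ω => Q (Z ω) ∧ P ω)
    (t := Finset.univ.filter Q) (g := Z) (fun ω hω => by simpa using (Finset.mem_filter.mp hω).2.1)]
  refine Finset.sum_congr rfl fun a ha => Finset.sum_congr ?_ fun _ _ => rfl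
  ext ω
  simp only [Finset.mem_filter, Finset.mem_univ, true_and] at ha ⊢
  constructor
  · rintro ⟨hZ, hP⟩
    exact ⟨⟨hZ ▸ ha, hP⟩, hZ⟩
  · rintro ⟨⟨-, hP⟩, hZ⟩
    exact ⟨hZ, hP⟩

lemma condDist_isDist [Fintype α] (hμ : ∀ ω, 0 ≤ μ ω) (Z : Ω → α) {P : Ω → Prop}
    (hP : 0 < prEvent μ P) : IsDist (condDist μ Z P) := by
  refine ⟨fun a => div_nonneg (prEvent_nonneg hμ _) hP.le, ?_⟩
  have h := prEvent_condDist μ Z P (fun _ => True)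
  simp only [true_and] at h
  rw [div_self hP.ne'] at h
  simpa [prEvent_eq_sum_filter] using h

end Probability

section Entropy

variable {α : Type*} [Fintype α] {ν : α → ℝ}

lemma ent2_eq_expect (ν : α → ℝ) : ent2 ν = expect ν (fun a => -Real.logb 2 (ν a)) := by
  simp only [ent2, expect, mul_neg]

lemma mul_logb_sub_mul_logb_le {a b : ℝ} (ha : 0 ≤ a) (hb : 0 ≤ b) (hab : 0 < a → 0 < b) :
    a * Real.logb 2 b - a * Real.logb 2 a ≤ (b - a) / Real.log 2 := by
  rcases ha.eq_or_lt with rfl | ha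
  · simpa using div_nonneg hb (Real.log_nonneg one_le_two)
  have hb := hab ha
  rw [← mul_sub, ← Real.logb_div hb.ne' ha.ne', Real.logb, ← mul_div_assoc]
  gcongr
  calc a * Real.log (b / a) ≤ a * (b / a - 1) := by
        gcongr; exact Real.log_le_sub_one_of_pos (div_pos hb ha)
    _ = b - a := by field_simp

/-- Gibbs' inequality. -/
theorem ent2_le_expect_neg_logb (hν : IsDist ν) {q : α → ℝ} (hq : ∀ a, 0 ≤ q a)
    (hq1 : ∑ a, q a ≤ 1) (hνq : ∀ a, 0 < ν a → 0 < q a) :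
    ent2 ν ≤ expect ν (fun a => -Real.logb 2 (q a)) := by
  have h := calc
    expect ν (fun a => -Real.logb 2 (ν a)) - expect ν (fun a => -Real.logb 2 (q a))
        = ∑ a, (ν a * Real.logb 2 (q a) - ν a * Real.logb 2 (ν a)) := by
          simp only [expect, ← Finset.sum_sub_distrib]
          exact Finset.sum_congr rfl fun a _ => by ring
    _ ≤ ∑ a, (q a - ν a) / Real.log 2 :=
        Finset.sum_le_sum fun a _ => mul_logb_sub_mul_logb_le (hν.1 a) (hq a) (hνq a)
    _ = ((∑ a, q a) - 1) / Real.log 2 := by rw [← hν.2, ← Finset.sum_sub_distrib, Finset.sum_div]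
    _ ≤ 0 := div_nonpos_of_nonpos_of_nonneg (by linarith) (Real.log_nonneg one_le_two)
  rw [ent2_eq_expect]
  linarith

lemma neg_logb_le_ent2 (hν : IsDist ν) {c : ℝ} (h : ∀ a, ν a ≤ c) :
    -Real.logb 2 c ≤ ent2 ν := by
  calc -Real.logb 2 c = ∑ a, ν a * -Real.logb 2 c := by rw [← Finset.sum_mul, hν.2, one_mul]
    _ ≤ ent2 ν := by
      rw [ent2_eq_expect]
      refine Finset.sum_le_sum fun a _ => ?_
      rcases (hν.1 a).eq_or_lt with h0 | h0
      · simp [← h0]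
      · gcongr
        exact neg_le_neg (Real.logb_le_logb_of_le one_lt_two h0 (h a))

lemma ent2_le_logb_card (hν : IsDist ν) : ent2 ν ≤ Real.logb 2 (Fintype.card α) := by
  have : Nonempty α := by
    by_contra h
    rw [not_nonempty_iff] at h
    simpa using hν.2
  have hcard : (0 : ℝ) < Fintype.card α := by exact_mod_cast Fintype.card_pos
  have h := ent2_le_expect_neg_logb hν (q := fun _ => (Fintype.card α : ℝ)⁻¹)
    (fun _ => by positivity) (by simp [hcard.ne']) (fun _ _ => by positivity)
  simpa [expect, Real.logb_inv, ← Finset.sum_mul, hν.2] using h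

lemma ent2_le_one {ν : Bool → ℝ} (hν : IsDist ν) : ent2 ν ≤ 1 := by
  simpa using ent2_le_logb_card hν

end Entropy

theorem ent2_le_sum_ent2_marginal {ι β : Type*} [Fintype ι] [DecidableEq ι] [Fintype β]
    {ν : (ι → β) → ℝ} (hν : IsDist ν) :
    ent2 ν ≤ ∑ i, ent2 (fun b => prEvent ν (fun x => x i = b)) := by
  have hmarg : ∀ i, IsDist (fun b => prEvent ν (fun x : ι → β => x i = b)) := fun i =>
    ⟨fun _ => prEvent_nonneg hν.1 _, (sum_prEvent_eq_sum ν _).trans hν.2⟩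
  have hle : ∀ x i, ν x ≤ prEvent ν (fun y : ι → β => y i = x i) := fun x i => le_prEvent hν.1 rfl
  have hprod : ∑ x : ι → β, ∏ i, prEvent ν (fun y : ι → β => y i = x i) = 1 := by
    rw [← Fintype.prod_sum fun i b => prEvent ν fun y : ι → β => y i = b]
    simp [(hmarg _).2]
  calc ent2 ν ≤ expect ν (fun x => -Real.logb 2 (∏ i, prEvent ν (fun y => y i = x i))) :=
        ent2_le_expect_neg_logb hν (fun x => Finset.prod_nonneg fun i _ => (hmarg i).1 _) hprod.le
          fun x hx => Finset.prod_pos fun i _ => hx.trans_le (hle x i)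
    _ = ∑ i, expect ν (fun x => -Real.logb 2 (prEvent ν (fun y => y i = x i))) := by
        simp only [expect]
        rw [Finset.sum_comm]
        refine Finset.sum_congr rfl fun x _ => ?_
        rcases (hν.1 x).eq_or_lt with h0 | h0
        · simp [← h0]
        rw [Real.logb_prod _ _ fun i _ => (h0.trans_le (hle x i)).ne', ← Finset.mul_sum,
          Finset.sum_neg_distrib]
    _ = ∑ i, ent2 (fun b => prEvent ν (fun x => x i = b)) := by
        simp only [ent2_eq_expect, expect_prEvent_eq_expect_comp]

lemma sum_add_card_filter_lt_half_le {ι : Type*} [Fintype ι] {e : ι → ℝ} (he : ∀ i, e i ≤ 1) :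
    ∑ i, e i + (Finset.univ.filter fun i => e i < 1 / 2).card / 2 ≤ Fintype.card ι := by
  have h : ∀ i, e i ≤ 1 - (if e i < 1 / 2 then 1 / 2 else 0) := fun i => by
    split_ifs with hi <;> linarith [he i]
  calc ∑ i, e i + (Finset.univ.filter fun i => e i < 1 / 2).card / 2
      ≤ ∑ i, (1 - (if e i < 1 / 2 then 1 / 2 else 0)) + _ := by gcongr with i; exact h i
    _ = Fintype.card ι := by
        rw [Finset.sum_sub_distrib, ← Finset.sum_filter]
        simp only [Finset.sum_const, Finset.card_univ, nsmul_eq_mul, mul_one]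
        ring

theorem prEvent_le_rpow_card_low_entropy {Ω : Type*} [Fintype Ω] {μ : Ω → ℝ}
    (hμ : ∀ ω, 0 ≤ μ ω) {n : ℕ} (X : Ω → (Fin n → Bool))
    (hX : ∀ x, prEvent μ (fun ω => X ω = x) ≤ 1 / 2 ^ n) (P : Ω → Prop) :
    prEvent μ P ≤ (2 : ℝ) ^ (-(({i : Fin n | ent2 (condDist μ (fun ω => X ω i) P) < 1 / 2} :
      Set (Fin n)).ncard : ℝ) / 2) := by
  classical
  rcases (prEvent_nonneg hμ P).eq_or_lt with hP | hP
  · rw [← hP]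
    positivity
  set L := ({i : Fin n | ent2 (condDist μ (fun ω => X ω i) P) < 1 / 2} : Set (Fin n)).ncard
  have hmin : (n : ℝ) + Real.logb 2 (prEvent μ P) ≤ ent2 (condDist μ X P) := by
    have h := neg_logb_le_ent2 (condDist_isDist hμ X hP) (c := 1 / 2 ^ n / prEvent μ P)
      fun x => div_le_div_of_nonneg_right
        ((prEvent_mono hμ fun ω h => h.1).trans (hX x)) hP.le
    rw [Real.logb_div (by positivity) hP.ne', one_div, Real.logb_inv, Real.logb_pow,
      Real.logb_self_eq_one one_lt_two] at h
    linarith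
  have hsub : ent2 (condDist μ X P) ≤ ∑ i, ent2 (condDist μ (fun ω => X ω i) P) := by
    convert ent2_le_sum_ent2_marginal (condDist_isDist hμ X hP) using 3 with i
    ext b
    rw [prEvent_condDist]
    rfl
  have hcount : ∑ i, ent2 (condDist μ (fun ω => X ω i) P) + L / 2 ≤ n := by
    have h := sum_add_card_filter_lt_half_le fun i =>
      ent2_le_one (condDist_isDist hμ (fun ω => X ω i) hP)
    rwa [Fintype.card_fin, ← Set.toFinset_ofPred, ← Set.ncard_eq_toFinset_card'] at h
  calc prEvent μ P = 2 ^ Real.logb 2 (prEvent μ P) :=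
        (Real.rpow_logb two_pos (by norm_num) hP).symm
    _ ≤ 2 ^ (-(L : ℝ) / 2) := Real.rpow_le_rpow_of_exponent_le one_le_two (by linarith)

lemma prEvent_comp_le_card_image_mul {Ω β : Type*} [Fintype Ω] [DecidableEq β] {μ : Ω → ℝ}
    (hμ : ∀ ω, 0 ≤ μ ω) (M : Ω → β) (Q : β → Prop) {b : ℝ} (hb : 0 ≤ b)
    (h : ∀ m, Q m → prEvent μ (fun ω => M ω = m) ≤ b) :
    prEvent μ (fun ω => Q (M ω)) ≤ (Finset.univ.image M).card * b := by
  rw [prEvent_eq_sum_image μ M, ← nsmul_eq_mul, ← Finset.sum_const]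
  refine Finset.sum_le_sum fun m _ => ?_
  by_cases hm : Q m
  · exact (prEvent_mono hμ fun ω h => h.2).trans (h m hm)
  · calc _ ≤ prEvent μ (fun _ => False) :=
          prEvent_mono hμ fun ω (h : Q (M ω) ∧ M ω = m) => hm (h.2 ▸ h.1)
      _ = 0 := by simp [prEvent_eq_sum_filter]
      _ ≤ b := hb

theorem stmt3_general {Ω M' : Type} [Fintype Ω] [Fintype M'] [DecidableEq M']
    (μ : Ω → ℝ) (hμ : IsDist μ) (n : ℕ) (C : ℝ)
    (X : Ω → (Fin n → Bool)) (M : Ω → M')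
    (hX : ∀ x : Fin n → Bool, prEvent μ (fun ω => X ω = x) = 1 / 2 ^ n)
    (hM : ((Finset.univ.image M).card : ℝ) ≤ (2:ℝ) ^ C)
    (t : ℝ) :
    prEvent μ (fun ω =>
        t ≤ (({i : Fin n |
            ent2 (condDist μ (fun ω' => X ω' i) (fun ω' => M ω' = M ω)) < 1/2} :
              Set (Fin n)).ncard : ℝ))
      ≤ (2:ℝ) ^ (C - t/2) := by
  calc _ ≤ (Finset.univ.image M).card * (2 : ℝ) ^ (-t / 2) :=
        prEvent_comp_le_card_image_mul hμ.1 M (fun m => t ≤ (({i : Fin n |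
            ent2 (condDist μ (fun ω' => X ω' i) (fun ω' => M ω' = m)) < 1 / 2} :
              Set (Fin n)).ncard : ℝ)) (by positivity) fun m hm =>
          (prEvent_le_rpow_card_low_entropy hμ.1 X (fun x => (hX x).le) _).trans
            (Real.rpow_le_rpow_of_exponent_le one_le_two (by linarith))
    _ ≤ 2 ^ C * 2 ^ (-t / 2) := by gcongr
    _ = 2 ^ (C - t / 2) := by rw [← Real.rpow_add two_pos, neg_div, ← sub_eq_add_neg]

theorem stmt3 {Ω M' : Type} [Fintype Ω] [Fintype M'] [DecidableEq M']
    (μ : Ω → ℝ) (hμ : IsDist μ) (n : ℕ) (hn : 1 ≤ n) (C : ℝ) (hC : 0 ≤ C)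
    (X : Ω → (Fin n → Bool)) (M : Ω → M')
    (hX : ∀ x : Fin n → Bool, prEvent μ (fun ω => X ω = x) = 1 / 2 ^ n)
    (hM : ((Finset.univ.image M).card : ℝ) ≤ (2:ℝ) ^ C)
    (t : ℝ) (ht : 0 ≤ t) :
    prEvent μ (fun ω =>
        t ≤ (({i : Fin n |
            ent2 (condDist μ (fun ω' => X ω' i) (fun ω' => M ω' = M ω)) < 1/2} :
              Set (Fin n)).ncard : ℝ))
      ≤ (2:ℝ) ^ (C - t/2) :=
  stmt3_general μ hμ n C X M hX hM t

end SR
end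

section
/- Let ρ be a bipartite distribution on U × V, let n ≥ 1, and let 0 < p ≤ 1. Then n · agr_ρ(p) ≤ 2 · col_ρ(n, p) (trivially true if col_ρ(n, p) = ∞). -/
open scoped BigOperators ENNReal

namespace SR

variable {U V X Y : Type*}

/-!
A `p`-collision protocol with output size `m` yields, for every `i ∈ [n]`, an agreement protocol:
each player outputs the probability, over its private randomness, that `i` lies in its set. Its
success probability is `Pr[i ∈ A ∩ B] ≥ p`, and summing its cost over `i` gives
`E|A| + E|B| ≤ 2m`, so `n · agr_ρ(p) ≤ 2m`.
-/

theorem IsDist.sum_mul_le {α : Type*} [Fintype α] {w : α → ℝ} (hw : IsDist w) {h : α → ℝ}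
    {c : ℝ} (hc : ∀ a, 0 < w a → h a ≤ c) : ∑ a, w a * h a ≤ c :=
  calc ∑ a, w a * h a ≤ ∑ a, w a * c := by
        refine Finset.sum_le_sum fun a _ => ?_
        rcases (hw.1 a).eq_or_lt with hwa | hwa
        · simp [← hwa]
        · exact mul_le_mul_of_nonneg_left (hc a hwa) hwa.le
    _ = c := by rw [← Finset.sum_mul, hw.2, one_mul]

theorem iid_nonneg {ρ : U × V → ℝ} (hρ : ∀ y, 0 ≤ ρ y) (ℓ : ℕ)
    (x : (Fin ℓ → U) × (Fin ℓ → V)) : 0 ≤ iid ρ ℓ x :=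
  Finset.prod_nonneg fun _ _ => hρ _

theorem isDist_iid [Fintype U] [Fintype V] {ρ : U × V → ℝ} (hρ : IsDist ρ) (ℓ : ℕ) :
    IsDist (iid ρ ℓ) := by
  refine ⟨iid_nonneg hρ.1 ℓ, ?_⟩
  calc ∑ x, iid ρ ℓ x = ∑ h : Fin ℓ → U × V, ∏ i, ρ (h i) :=
        Fintype.sum_equiv (Equiv.arrowProdEquivProdArrow (Fin ℓ) (fun _ => U) (fun _ => V)).symm
          _ _ fun _ => rfl
    _ = 1 := by rw [← Fintype.piFinset_univ, ← Finset.prod_univ_sum]; simp [hρ.2]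

theorem agr_le [Fintype U] [Fintype V] {ρ : U × V → ℝ} (hρ : ∀ y, 0 ≤ ρ y) {p : ℝ} {ℓ : ℕ}
    {f : (Fin ℓ → U) → ℝ} {g : (Fin ℓ → V) → ℝ}
    (hf : ∀ x, f x ∈ Set.Icc (0 : ℝ) 1) (hg : ∀ y, g y ∈ Set.Icc (0 : ℝ) 1)
    (hp : p ≤ ∑ x : (Fin ℓ → U) × (Fin ℓ → V), iid ρ ℓ x * (f x.1 * g x.2)) :
    agr ρ p ≤ (∑ x : (Fin ℓ → U) × (Fin ℓ → V), iid ρ ℓ x * f x.1)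
        + (∑ x : (Fin ℓ → U) × (Fin ℓ → V), iid ρ ℓ x * g x.2) := by
  refine csInf_le ⟨0, ?_⟩ ⟨ℓ, f, g, hf, hg, hp, rfl⟩
  rintro c ⟨ℓ', f', g', hf', hg', -, rfl⟩
  have hw := iid_nonneg hρ ℓ'
  exact add_nonneg (Finset.sum_nonneg fun x _ => mul_nonneg (hw x) (hf' x.1).1)
    (Finset.sum_nonneg fun x _ => mul_nonneg (hw x) (hg' x.2).1)

section hitProb

variable {R S Ω ι : Type*} [Fintype R] [DecidableEq ι]

noncomputable def hitProb (μ : R → ℝ) (C : R → Finset ι) (i : ι) : ℝ :=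
  ∑ r, μ r * if i ∈ C r then 1 else 0

theorem hitProb_mem_Icc {μ : R → ℝ} (hμ : IsDist μ) (C : R → Finset ι) (i : ι) :
    hitProb μ C i ∈ Set.Icc (0 : ℝ) 1 := by
  have hind : ∀ r, (if i ∈ C r then (1 : ℝ) else 0) ∈ Set.Icc (0 : ℝ) 1 := fun r => by
    split_ifs <;> simp
  refine ⟨Finset.sum_nonneg fun r _ => mul_nonneg (hμ.1 r) (hind r).1, ?_⟩
  exact hμ.sum_mul_le fun r _ => (hind r).2

theorem hitProb_mul_hitProb [Fintype S] (μ : R → ℝ) (ν : S → ℝ) (C : R → Finset ι)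
    (D : S → Finset ι) (i : ι) :
    hitProb μ C i * hitProb ν D i
      = ∑ r, ∑ s, μ r * ν s * if i ∈ C r ∧ i ∈ D s then 1 else 0 := by
  rw [hitProb, hitProb, Finset.sum_mul_sum]
  refine Finset.sum_congr rfl fun r _ => Finset.sum_congr rfl fun s _ => ?_
  split_ifs <;> simp_all

theorem sum_hitProb [Fintype ι] (μ : R → ℝ) (C : R → Finset ι) :
    ∑ i, hitProb μ C i = ∑ r, μ r * (C r).card := by
  simp only [hitProb]
  rw [Finset.sum_comm]
  simp [mul_comm]

theorem sum_sum_mul_hitProb_le [Fintype ι] [Fintype Ω] {w : Ω → ℝ} (hw : IsDist w)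
    {μ : R → ℝ} (hμ : IsDist μ) {C : Ω → R → Finset ι} {m : ℕ}
    (hC : ∀ ω r, 0 < w ω → 0 < μ r → (C ω r).card ≤ m) :
    ∑ i, ∑ ω, w ω * hitProb μ (C ω) i ≤ m := by
  rw [Finset.sum_comm]
  simp only [← Finset.mul_sum, sum_hitProb]
  exact hw.sum_mul_le fun ω hω => hμ.sum_mul_le fun r hr => by exact_mod_cast hC ω r hω hr

end hitProb

theorem natCast_mul_agr_le_of_colLE [Fintype U] [Fintype V] {ρ : U × V → ℝ} (hρ : IsDist ρ)
    {n : ℕ} {p : ℝ} {m : ℕ} (h : ColLE ρ n p m) : n * agr ρ p ≤ 2 * m := by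
  obtain ⟨ℓ, sA, sB, μA, μB, A, B, hμA, hμB, hsucc, hA, hB⟩ := h
  have hsucc' : ∀ i, p ≤ ∑ x : (Fin ℓ → U) × (Fin ℓ → V),
      iid ρ ℓ x * (hitProb μA (A x.1) i * hitProb μB (B x.2) i) := fun i =>
    (hsucc i).trans_eq (by simp only [hitProb_mul_hitProb, Finset.mul_sum, mul_assoc])
  calc n * agr ρ p = ∑ _i : Fin n, agr ρ p := by simp
    _ ≤ ∑ i, ((∑ x : (Fin ℓ → U) × (Fin ℓ → V), iid ρ ℓ x * hitProb μA (A x.1) i)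
          + ∑ x : (Fin ℓ → U) × (Fin ℓ → V), iid ρ ℓ x * hitProb μB (B x.2) i) :=
        Finset.sum_le_sum fun i _ => agr_le hρ.1 (fun _ => hitProb_mem_Icc hμA _ i)
          (fun _ => hitProb_mem_Icc hμB _ i) (hsucc' i)
    _ ≤ m + m := by
        rw [Finset.sum_add_distrib]
        exact add_le_add (sum_sum_mul_hitProb_le (isDist_iid hρ ℓ) hμA hA)
          (sum_sum_mul_hitProb_le (isDist_iid hρ ℓ) hμB hB)
    _ = 2 * m := by ring

theorem exists_colLE_of_col_ne_top [Fintype U] [Fintype V] {ρ : U × V → ℝ} {n : ℕ} {p : ℝ}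
    (h : col ρ n p ≠ ⊤) : ∃ m : ℕ, col ρ n p = m ∧ ColLE ρ n p m := by
  have hne : {k : ℕ∞ | ∃ m : ℕ, k = m ∧ ColLE ρ n p m}.Nonempty :=
    Set.nonempty_iff_ne_empty.2 fun hE => h (by rw [col, hE, sInf_empty])
  exact csInf_mem hne

theorem stmt6_general {U V : Type} [Fintype U] [Fintype V]
    (ρ : U × V → ℝ) (hρ : IsDist ρ) (n : ℕ)
    (p : ℝ) :
    ENNReal.ofReal ((n : ℝ) * agr ρ p) ≤ 2 * ((col ρ n p : ℕ∞) : ℝ≥0∞) := by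
  rcases eq_or_ne (col ρ n p) ⊤ with htop | hfin
  · simp [htop]
  obtain ⟨m, hm, hcol⟩ := exists_colLE_of_col_ne_top hfin
  rw [hm]
  calc ENNReal.ofReal (n * agr ρ p) ≤ ENNReal.ofReal (2 * m) :=
        ENNReal.ofReal_le_ofReal (natCast_mul_agr_le_of_colLE hρ hcol)
    _ = 2 * ((m : ℕ∞) : ℝ≥0∞) := by simp [ENNReal.ofReal_mul]

theorem stmt6 {U V : Type} [Fintype U] [Fintype V] [Nonempty U] [Nonempty V]
    (ρ : U × V → ℝ) (hρ : IsDist ρ) (n : ℕ) (hn : 1 ≤ n)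
    (p : ℝ) (hp0 : 0 < p) (hp1 : p ≤ 1) :
    ENNReal.ofReal ((n : ℝ) * agr ρ p) ≤ 2 * ((col ρ n p : ℕ∞) : ℝ≥0∞) :=
  stmt6_general ρ hρ n p

end SR
end
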